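/- Let f : (0,∞) → [0,∞) be infinitely differentiable and completely decreasing, i.e. (−1)^k f^(k)(x) ≥ 0 for every x ∈ (0,∞) and every integer k ≥ 1. Let n ≥ 1 be an integer and let x_1, …, x_n ∈ (0,∞) be pairwise distinct. If (−1)^(n−1) f^(n−1)(x) tends to a real number L₀ as x → 0+, then Σ_{i=1}^n f(x_i) / Π_{j≠i} (x_j − x_i) ≤ L₀/(n−1)!; and if (−1)^(n−1) f^(n−1)(x) tends to a real number L_∞ as x → ∞, then L_∞/(n−1)! ≤ Σ_{i=1}^n f(x_i) / Π_{j≠i} (x_j − x_i). -/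

import Mathlib

open Set Filter Topology Finset

private lemma contDiffOn_iter {f : ℝ → ℝ} (hf : ContDiffOn ℝ (⊤ : ℕ∞) f (Set.Ioi 0)) :
    ∀ k : ℕ, ContDiffOn ℝ (⊤ : ℕ∞) (iteratedDeriv k f) (Set.Ioi 0)
  | 0 => by simpa [iteratedDeriv_zero] using hf
  | (k + 1) => by
    rw [iteratedDeriv_succ]
    exact (contDiffOn_iter hf k).deriv_of_isOpen isOpen_Ioi (by simp)

private lemma poly_contDiff (p : Polynomial ℝ) : ContDiff ℝ (⊤ : ℕ∞) fun t : ℝ => p.eval t := by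
  induction p using Polynomial.induction_on' with
  | add p q hp hq => simpa [Polynomial.eval_add] using hp.add hq
  | monomial n a =>
      simpa [Polynomial.eval_monomial] using contDiff_const.mul (contDiff_id.pow n)

private lemma rolle_multi (g : ℝ → ℝ) (hg : ContinuousOn g (Set.Ioi 0)) :
    ∀ (m : ℕ) (s : Finset ℝ) (hs : s.Nonempty), ↑s ⊆ Set.Ioi (0:ℝ) → s.card = m + 2 →
      (∀ y ∈ s, g y = 0) →
      ∃ t : Finset ℝ, ↑t ⊆ Set.Ioo (s.min' hs) (s.max' hs) ∧ t.card = m + 1 ∧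
        ∀ y ∈ t, deriv g y = 0 := by
  intro m
  induction m with
  | zero =>
    intro s hs hsub hcard hzero
    have hlt : s.min' hs < s.max' hs := Finset.min'_lt_max'_of_card s (by omega)
    have hsubI : Set.Icc (s.min' hs) (s.max' hs) ⊆ Set.Ioi (0:ℝ) := fun y hy =>
      lt_of_lt_of_le (hsub (s.min'_mem hs)) hy.1
    obtain ⟨c, hc, hc0⟩ := exists_deriv_eq_zero hlt (hg.mono hsubI)
      (by rw [hzero _ (s.min'_mem hs), hzero _ (s.max'_mem hs)])
    exact ⟨{c}, by simpa using hc, by simp, by simpa using hc0⟩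
  | succ m ih =>
    intro s hs hsub hcard hzero
    have has : s.min' hs ∈ s := s.min'_mem hs
    set a := s.min' hs with ha
    set s' := s.erase a with hs'def
    have hcard' : s'.card = m + 2 := by rw [hs'def, Finset.card_erase_of_mem has]; omega
    have hs' : s'.Nonempty := Finset.card_pos.mp (by omega)
    have hbs' : s'.min' hs' ∈ s' := s'.min'_mem hs'
    set b := s'.min' hs' with hb
    have hbs : b ∈ s := Finset.mem_of_mem_erase hbs'
    have hab : a < b := lt_of_le_of_ne (s.min'_le b hbs) (Ne.symm (Finset.ne_of_mem_erase hbs'))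
    have hsubI : Set.Icc a b ⊆ Set.Ioi (0:ℝ) := fun y hy => lt_of_lt_of_le (hsub has) hy.1
    obtain ⟨c, hc, hc0⟩ := exists_deriv_eq_zero hab (hg.mono hsubI)
      (by rw [hzero _ has, hzero _ hbs])
    obtain ⟨t', ht'sub, ht'card, ht'zero⟩ := ih s' hs'
      (fun y hy => hsub (Finset.mem_of_mem_erase hy)) hcard'
      (fun y hy => hzero y (Finset.mem_of_mem_erase hy))
    have hcnot : c ∉ t' := by
      intro hmem
      exact absurd (ht'sub hmem).1 (not_lt.mpr hc.2.le)
    refine ⟨insert c t', ?_, ?_, ?_⟩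
    · intro y hy
      simp only [Finset.coe_insert, Set.mem_insert_iff, Finset.mem_coe] at hy
      rcases hy with rfl | hy
      · exact ⟨hc.1, lt_of_lt_of_le hc.2 (s.le_max' b hbs)⟩
      · refine ⟨lt_trans hab (ht'sub hy).1, lt_of_lt_of_le (ht'sub hy).2 ?_⟩
        exact Finset.max'_subset hs' (Finset.erase_subset a s)
    · rw [Finset.card_insert_of_notMem hcnot, ht'card]
    · intro y hy
      rcases Finset.mem_insert.mp hy with rfl | hy
      · exact hc0
      · exact ht'zero y hy

private lemma rolle_iter : ∀ (m : ℕ) (g : ℝ → ℝ), ContDiffOn ℝ (⊤ : ℕ∞) g (Set.Ioi 0) →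
    ∀ s : Finset ℝ, ↑s ⊆ Set.Ioi (0:ℝ) → s.card = m + 1 → (∀ y ∈ s, g y = 0) →
    ∃ ξ ∈ Set.Ioi (0:ℝ), iteratedDeriv m g ξ = 0 := by
  intro m
  induction m with
  | zero =>
    intro g hg s hsub hcard hzero
    obtain ⟨y, hy⟩ := Finset.card_pos.mp (by omega : 0 < s.card)
    exact ⟨y, hsub hy, by simpa using hzero y hy⟩
  | succ m ih =>
    intro g hg s hsub hcard hzero
    have hs : s.Nonempty := Finset.card_pos.mp (by omega)
    obtain ⟨t, htsub, htcard, htzero⟩ := rolle_multi g hg.continuousOn m s hs hsub hcard hzero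
    have htsub' : ↑t ⊆ Set.Ioi (0:ℝ) := fun y hy =>
      lt_trans (hsub (s.min'_mem hs)) (htsub hy).1
    obtain ⟨ξ, hξ, hval⟩ := ih (deriv g) (hg.deriv_of_isOpen isOpen_Ioi (by simp)) t htsub'
      htcard htzero
    exact ⟨ξ, hξ, by rw [iteratedDeriv_succ']; exact hval⟩

private lemma iter_sub {f : ℝ → ℝ} (hf : ContDiffOn ℝ (⊤ : ℕ∞) f (Set.Ioi 0)) (p : Polynomial ℝ) :
    ∀ (k : ℕ) ⦃ξ : ℝ⦄, ξ ∈ Set.Ioi (0:ℝ) →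
      iteratedDeriv k (fun t => f t - p.eval t) ξ
        = iteratedDeriv k f ξ - (Polynomial.derivative^[k] p).eval ξ
  | 0, ξ, hξ => by simp [iteratedDeriv_zero]
  | (k + 1), ξ, hξ => by
    have hEq : iteratedDeriv k (fun t => f t - p.eval t)
        =ᶠ[nhds ξ] fun t => iteratedDeriv k f t - (Polynomial.derivative^[k] p).eval t := by
      filter_upwards [isOpen_Ioi.mem_nhds hξ] with t ht using iter_sub hf p k ht
    have hA : DifferentiableAt ℝ (iteratedDeriv k f) ξ :=
      ((contDiffOn_iter hf k).differentiableOn (by simp)).differentiableAt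
        (isOpen_Ioi.mem_nhds hξ)
    have hB : DifferentiableAt ℝ (fun t => (Polynomial.derivative^[k] p).eval t) ξ :=
      Polynomial.differentiableAt _
    rw [iteratedDeriv_succ, hEq.deriv_eq, deriv_fun_sub hA hB, ← iteratedDeriv_succ,
      Polynomial.deriv, Function.iterate_succ_apply']

private lemma mean_value (f : ℝ → ℝ) (hf : ContDiffOn ℝ (⊤ : ℕ∞) f (Set.Ioi 0))
    (m : ℕ) (x : Fin (m + 1) → ℝ) (hx : ∀ i, x i ∈ Set.Ioi (0:ℝ))
    (hinj : Function.Injective x) :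
    ∃ ξ ∈ Set.Ioi (0:ℝ), iteratedDeriv m f ξ =
      (m.factorial : ℝ) * ∑ i, f (x i) / ∏ j ∈ Finset.univ.erase i, (x i - x j) := by
  classical
  set c : Fin (m + 1) → ℝ := fun i => f (x i) / ∏ j ∈ Finset.univ.erase i, (x i - x j) with hc
  set p : Polynomial ℝ := ∑ i, Polynomial.C (c i) *
    ∏ j ∈ Finset.univ.erase i, (Polynomial.X - Polynomial.C (x j)) with hp
  have hcarderase : ∀ i : Fin (m + 1), (Finset.univ.erase i).card = m := by
    intro i
    rw [Finset.card_erase_of_mem (Finset.mem_univ i), Finset.card_univ, Fintype.card_fin]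
    omega
  have hmonic : ∀ i : Fin (m + 1),
      (∏ j ∈ Finset.univ.erase i, (Polynomial.X - Polynomial.C (x j))).Monic :=
    fun i => Polynomial.monic_prod_of_monic _ _ fun j _ => Polynomial.monic_X_sub_C (x j)
  have hdeg : ∀ i : Fin (m + 1),
      (∏ j ∈ Finset.univ.erase i, (Polynomial.X - Polynomial.C (x j))).natDegree = m := by
    intro i
    rw [Polynomial.natDegree_prod_of_monic _ _ fun j _ => Polynomial.monic_X_sub_C (x j)]
    simp [Polynomial.natDegree_X_sub_C, hcarderase i]
  have hpdeg : p.natDegree ≤ m := by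
    refine Polynomial.natDegree_sum_le_of_forall_le _ _ fun i _ => ?_
    exact le_trans (Polynomial.natDegree_C_mul_le _ _) (le_of_eq (hdeg i))
  have hcoeff : p.coeff m = ∑ i, c i := by
    rw [hp, Polynomial.finset_sum_coeff]
    refine Finset.sum_congr rfl fun i _ => ?_
    rw [Polynomial.coeff_C_mul]
    have : (∏ j ∈ Finset.univ.erase i, (Polynomial.X - Polynomial.C (x j))).coeff m = 1 := by
      have := (hmonic i).coeff_natDegree
      rwa [hdeg i] at this
    rw [this, mul_one]
  have hiterp : Polynomial.derivative^[m] p =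
      Polynomial.C ((m.factorial : ℝ) * ∑ i, c i) := by
    have h1 : (Polynomial.derivative^[m] p).natDegree ≤ 0 := by
      have := Polynomial.natDegree_iterate_derivative p m
      omega
    rw [Polynomial.eq_C_of_natDegree_le_zero h1, Polynomial.coeff_iterate_derivative]
    simp [Nat.descFactorial_self, hcoeff, nsmul_eq_mul]
  have hprodne : ∀ k : Fin (m + 1), (∏ j ∈ Finset.univ.erase k, (x k - x j)) ≠ 0 := by
    intro k
    refine Finset.prod_ne_zero_iff.mpr fun j hj => sub_ne_zero_of_ne fun hEq => ?_
    exact (Finset.mem_erase.mp hj).1 (hinj hEq.symm)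
  have heval : ∀ k : Fin (m + 1), p.eval (x k) = f (x k) := by
    intro k
    rw [hp, Polynomial.eval_finset_sum]
    rw [Finset.sum_eq_single k]
    · simp only [Polynomial.eval_mul, Polynomial.eval_C, Polynomial.eval_prod,
        Polynomial.eval_sub, Polynomial.eval_X]
      rw [hc]
      exact div_mul_cancel₀ _ (hprodne k)
    · intro i _ hik
      simp only [Polynomial.eval_mul, Polynomial.eval_C, Polynomial.eval_prod,
        Polynomial.eval_sub, Polynomial.eval_X]
      rw [Finset.prod_eq_zero (Finset.mem_erase.mpr ⟨Ne.symm hik, Finset.mem_univ k⟩)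
        (sub_self (x k)), mul_zero]
    · intro h
      exact absurd (Finset.mem_univ k) h
  set s : Finset ℝ := Finset.image x Finset.univ with hs
  have hsub : ↑s ⊆ Set.Ioi (0:ℝ) := by
    intro y hy
    simp only [hs, Finset.coe_image, Set.mem_image, Finset.coe_univ, Set.mem_univ,
      true_and] at hy
    obtain ⟨i, _, rfl⟩ := hy
    exact hx i
  have hcard : s.card = m + 1 := by
    rw [hs, Finset.card_image_of_injective _ hinj, Finset.card_univ, Fintype.card_fin]
  have hzero : ∀ y ∈ s, (fun t => f t - p.eval t) y = 0 := by
    intro y hy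
    simp only [hs, Finset.mem_image] at hy
    obtain ⟨i, _, rfl⟩ := hy
    simp [heval i]
  have hcont : ContDiffOn ℝ (⊤ : ℕ∞) (fun t => f t - p.eval t) (Set.Ioi 0) :=
    hf.sub (poly_contDiff p).contDiffOn
  obtain ⟨ξ, hξ, hval⟩ := rolle_iter m _ hcont s hsub hcard hzero
  refine ⟨ξ, hξ, ?_⟩
  have h2 := iter_sub hf p m hξ
  rw [hval] at h2
  have h3 : iteratedDeriv m f ξ = (Polynomial.derivative^[m] p).eval ξ := by linarith
  rw [h3, hiterp, Polynomial.eval_C]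

theorem completely_decreasing_limit_bounds (f : ℝ → ℝ)
    (hf : ContDiffOn ℝ (⊤ : ℕ∞) f (Set.Ioi 0))
    (hnonneg : ∀ x ∈ Set.Ioi (0 : ℝ), 0 ≤ f x)
    (hmono : ∀ k : ℕ, 1 ≤ k → ∀ x ∈ Set.Ioi (0 : ℝ),
      (-1 : ℝ) ^ k * iteratedDeriv k f x ≥ 0)
    (n : ℕ) (hn : 1 ≤ n) (x : Fin n → ℝ) (hx : ∀ i, x i ∈ Set.Ioi (0 : ℝ))
    (hinj : Function.Injective x) :
    (∀ L₀ : ℝ, Tendsto (fun t : ℝ => (-1 : ℝ) ^ (n - 1) * iteratedDeriv (n - 1) f t)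
        (nhdsWithin 0 (Set.Ioi 0)) (nhds L₀) →
      ∑ i, f (x i) / ∏ j ∈ Finset.univ.erase i, (x j - x i) ≤ L₀ / (n - 1).factorial) ∧
    (∀ Linf : ℝ, Tendsto (fun t : ℝ => (-1 : ℝ) ^ (n - 1) * iteratedDeriv (n - 1) f t)
        atTop (nhds Linf) →
      Linf / (n - 1).factorial ≤ ∑ i, f (x i) / ∏ j ∈ Finset.univ.erase i, (x j - x i)) := by
  classical
  obtain ⟨m, rfl⟩ : ∃ m, n = m + 1 := ⟨n - 1, (Nat.succ_pred_eq_of_pos hn).symm⟩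
  simp only [Nat.add_sub_cancel]
  -- `S` is the sum in the statement, `c` the divided-difference form
  set S : ℝ := ∑ i, f (x i) / ∏ j ∈ Finset.univ.erase i, (x j - x i) with hS
  set c : ℝ := ∑ i, f (x i) / ∏ j ∈ Finset.univ.erase i, (x i - x j) with hc
  have hsign : ((-1:ℝ) ^ m) * ((-1:ℝ) ^ m) = 1 := by
    rw [← pow_add]
    exact Even.neg_one_pow ⟨m, rfl⟩
  have hinv : ((-1:ℝ) ^ m)⁻¹ = (-1:ℝ) ^ m := inv_eq_of_mul_eq_one_right hsign
  have hSc : S = (-1:ℝ) ^ m * c := by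
    rw [hS, hc, Finset.mul_sum]
    refine Finset.sum_congr rfl fun i _ => ?_
    have hkey : (∏ j ∈ Finset.univ.erase i, (x j - x i))
        = (-1:ℝ) ^ m * ∏ j ∈ Finset.univ.erase i, (x i - x j) := by
      have h1 : (∏ j ∈ Finset.univ.erase i, (x j - x i))
          = ∏ j ∈ Finset.univ.erase i, ((-1:ℝ) * (x i - x j)) :=
        Finset.prod_congr rfl fun j _ => by ring
      rw [h1, Finset.prod_mul_distrib, Finset.prod_const,
        Finset.card_erase_of_mem (Finset.mem_univ i), Finset.card_univ, Fintype.card_fin,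
        Nat.add_sub_cancel]
    rw [hkey, mul_comm ((-1:ℝ) ^ m) (∏ j ∈ Finset.univ.erase i, (x i - x j)), ← div_div,
      div_eq_mul_inv (f (x i) / _), hinv, mul_comm]
  have hfactpos : (0:ℝ) < (m.factorial : ℝ) := by
    exact_mod_cast Nat.factorial_pos m
  obtain ⟨ξ, hξ, hξval⟩ := mean_value f hf m x hx hinj
  have hgξ : (-1:ℝ) ^ m * iteratedDeriv m f ξ = (m.factorial : ℝ) * S := by
    rw [hξval, ← hc, hSc]
    ring
  -- antitonicity of t ↦ (-1)^m * iteratedDeriv m f t on (0, ∞)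
  have hanti : AntitoneOn (fun t => (-1:ℝ) ^ m * iteratedDeriv m f t) (Set.Ioi 0) := by
    refine antitoneOn_of_deriv_nonpos (convex_Ioi 0)
      (continuousOn_const.mul (contDiffOn_iter hf m).continuousOn) ?_ ?_
    · rw [interior_Ioi]
      exact (((contDiffOn_iter hf m).differentiableOn (by simp)).const_mul _)
    · intro t ht
      rw [interior_Ioi] at ht
      have hDA : DifferentiableAt ℝ (iteratedDeriv m f) t :=
        ((contDiffOn_iter hf m).differentiableOn (by simp)).differentiableAt
          (isOpen_Ioi.mem_nhds ht)
      rw [deriv_const_mul _ hDA, ← iteratedDeriv_succ]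
      have h2 := hmono (m + 1) (by omega) t ht
      have h3 : (-1:ℝ) ^ (m + 1) = -(-1:ℝ) ^ m := by ring
      rw [h3] at h2
      linarith
  constructor
  · intro L₀ hL
    have hle : (-1:ℝ) ^ m * iteratedDeriv m f ξ ≤ L₀ := by
      refine ge_of_tendsto hL ?_
      have hmem : Set.Ioo (0:ℝ) ξ ∈ nhdsWithin (0:ℝ) (Set.Ioi 0) :=
        Ioo_mem_nhdsGT_of_mem ⟨le_refl 0, hξ⟩
      filter_upwards [hmem] with t ht
      exact hanti ht.1 hξ ht.2.le
    rw [le_div_iff₀ hfactpos]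
    rw [hgξ] at hle
    linarith
  · intro Linf hL
    have hle : Linf ≤ (-1:ℝ) ^ m * iteratedDeriv m f ξ := by
      refine le_of_tendsto hL ?_
      filter_upwards [eventually_ge_atTop ξ] with t ht
      exact hanti hξ (lt_of_lt_of_le hξ ht) ht
    rw [div_le_iff₀ hfactpos]
    rw [hgξ] at hle
    linarith
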